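/- For every m ∈ ℕ and every x = (x_1,...,x_m) ∈ ℝ^m, 2(1 − cos(π/(2m+1))) |x|² ≤ Σ_{j=1}^{m−1} (x_{j+1} − x_j)² + min{x_1²,...,x_m²}, and the constant 2(1 − cos(π/(2m+1))) is optimal: there exists x ≠ 0 attaining equality. -/

import Mathlib

/-!
Ground-state argument. Let `a = π / (2m + 1)`, `λ = 2 (1 - cos a)`, and let `K` be an index where
`x_K²` is minimal. By Picone's identity, a positive `w` with `(-Δw)_j + [j = K] w_j ≥ λ w_j`
(Neumann Laplacian of the path) gives `λ |x|² ≤ Σ (x_{j+1} - x_j)² + x_K²`. Such a `w` is obtained by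
gluing at `K` the Neumann modes `cos ((j + 1/2) a)` and `cos ((m - 1 - j + 1/2) a)`: they solve the
equation away from `K`, and at `K` the excess is `sin (K a) sin ((m - 1 - K) a) ≥ 0`. For `K = 0` the
excess vanishes, and `w`, proportional to `sin ((j + 1) a)`, attains equality.
-/

open Real Finset

/-- Truncated subtraction makes `w (0 - 1) = w 0`, a reflecting left end; the right end `N` of the
path is reflecting when `w (N + 1) = w N`. -/
def pathLaplacian (w : ℕ → ℝ) (j : ℕ) : ℝ := 2 * w j - w (j - 1) - w (j + 1)

theorem sum_mul_pathLaplacian (u w : ℕ → ℝ) (N : ℕ) :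
    ∑ j ∈ range (N + 1), u j * pathLaplacian w j =
      ∑ j ∈ range N, (w (j + 1) - w j) * (u (j + 1) - u j) + u N * (w N - w (N + 1)) := by
  induction N with
  | zero => simp only [sum_range_one, sum_range_zero, pathLaplacian, Nat.zero_sub, zero_add]; ring
  | succ N ih =>
    rw [sum_range_succ, ih, sum_range_succ, pathLaplacian, Nat.add_sub_cancel]
    ring

theorem picone_inequality {v w : ℝ} (hv : 0 < v) (hw : 0 < w) (x y : ℝ) :
    (w - v) * (y ^ 2 / w - x ^ 2 / v) ≤ (y - x) ^ 2 := by
  have key : (y - x) ^ 2 - (w - v) * (y ^ 2 / w - x ^ 2 / v) = (v * y - w * x) ^ 2 / (v * w) := by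
    field_simp
    ring
  rw [← sub_nonneg, key]
  positivity

section GroundState

variable {N : ℕ} {w V : ℕ → ℝ} {lam : ℝ}

theorem mul_sum_sq_le_of_supersolution (hw : ∀ j ≤ N, 0 < w j) (hN : w N ≤ w (N + 1))
    (hsuper : ∀ j ≤ N, lam * w j ≤ pathLaplacian w j + V j * w j) (x : ℕ → ℝ) :
    lam * ∑ j ∈ range (N + 1), x j ^ 2 ≤
      ∑ j ∈ range N, (x (j + 1) - x j) ^ 2 + ∑ j ∈ range (N + 1), V j * x j ^ 2 := by
  set u : ℕ → ℝ := fun j => x j ^ 2 / w j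
  have hu : ∀ j ≤ N, 0 ≤ u j := fun j hj => div_nonneg (sq_nonneg _) (hw j hj).le
  have hedges : ∑ j ∈ range N, (w (j + 1) - w j) * (u (j + 1) - u j) ≤
      ∑ j ∈ range N, (x (j + 1) - x j) ^ 2 := by
    refine sum_le_sum fun j hj => picone_inequality (hw j ?_) (hw (j + 1) ?_) _ _ <;>
      simp only [mem_range] at hj <;> omega
  have hvertices : ∑ j ∈ range (N + 1), (lam - V j) * x j ^ 2 ≤
      ∑ j ∈ range (N + 1), u j * pathLaplacian w j := by
    refine sum_le_sum fun j hj => ?_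
    have hj : j ≤ N := Nat.lt_succ_iff.mp (mem_range.mp hj)
    calc (lam - V j) * x j ^ 2 = u j * ((lam - V j) * w j) := by
          simp only [u]; field_simp [(hw j hj).ne']
      _ ≤ u j * pathLaplacian w j := by
          gcongr
          · exact hu j hj
          · linarith [hsuper j hj]
  have hboundary : u N * (w N - w (N + 1)) ≤ 0 :=
    mul_nonpos_of_nonneg_of_nonpos (hu N le_rfl) (by linarith)
  simp only [sub_mul, sum_sub_distrib, ← mul_sum] at hvertices
  linarith [sum_mul_pathLaplacian u w N]

theorem sum_sq_sub_add_eq_of_solution (hN : w (N + 1) = w N)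
    (hsol : ∀ j ≤ N, pathLaplacian w j + V j * w j = lam * w j) :
    ∑ j ∈ range N, (w (j + 1) - w j) ^ 2 + ∑ j ∈ range (N + 1), V j * w j ^ 2 =
      lam * ∑ j ∈ range (N + 1), w j ^ 2 := by
  calc ∑ j ∈ range N, (w (j + 1) - w j) ^ 2 + ∑ j ∈ range (N + 1), V j * w j ^ 2
      = ∑ j ∈ range (N + 1), (w j * pathLaplacian w j + V j * w j ^ 2) := by
        rw [sum_add_distrib, sum_mul_pathLaplacian, hN, sub_self, mul_zero, add_zero]
        simp only [sq]
    _ = ∑ j ∈ range (N + 1), lam * w j ^ 2 :=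
        sum_congr rfl fun j hj => by
          linear_combination w j * hsol j (Nat.lt_succ_iff.mp (mem_range.mp hj))
    _ = lam * ∑ j ∈ range (N + 1), w j ^ 2 := (mul_sum _ _ _).symm

end GroundState

noncomputable def neumannMode (a t : ℝ) : ℝ := cos ((t + 1 / 2) * a)

section NeumannMode

variable {a : ℝ}

theorem neumannMode_neg_one : neumannMode a (-1) = neumannMode a 0 := by
  rw [neumannMode, neumannMode, ← cos_neg]
  ring_nf

theorem neumannMode_natCast_sub_one (j : ℕ) :
    neumannMode a ↑(j - 1) = neumannMode a (j - 1) := by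
  rcases j with _ | j
  · simp [neumannMode_neg_one]
  · simp

theorem neumannMode_sub_one_add_neumannMode_add_one (t : ℝ) :
    neumannMode a (t - 1) + neumannMode a (t + 1) = 2 * cos a * neumannMode a t := by
  simp only [neumannMode]
  rw [show (t - 1 + 1 / 2) * a = (t + 1 / 2) * a - a by ring,
    show (t + 1 + 1 / 2) * a = (t + 1 / 2) * a + a by ring, cos_sub, cos_add]
  ring

theorem neumannMode_pos {N : ℕ} {t : ℝ} (ha : (2 * N + 3) * a = π) (ht : -1 < t)
    (htN : t < N + 1) : 0 < neumannMode a t := by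
  have ha0 : 0 < a := pos_of_mul_pos_right (ha ▸ pi_pos) (by positivity)
  apply cos_pos_of_mem_Ioo
  constructor <;> nlinarith

/-- Two modes glued `p` and `q` steps away from the two ends; the excess `sin (p a) sin (q a)` is
nonnegative for `0 ≤ p, q ≤ N`. -/
theorem neumannMode_junction {p q : ℝ} (ha : (2 * (p + q) + 3) * a = π) :
    3 * (neumannMode a p * neumannMode a q) - neumannMode a (p - 1) * neumannMode a q -
        neumannMode a p * neumannMode a (q - 1) =
      2 * (1 - cos a) * (neumannMode a p * neumannMode a q) + sin (p * a) * sin (q * a) := by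
  set P := (p + 1 / 2) * a
  set Q := (q + 1 / 2) * a
  have hPQ : P + Q = π / 2 - a / 2 := by linear_combination ha / 2
  have hsin : sin (P + Q) = cos (a / 2) := by rw [hPQ, sin_pi_div_two_sub]
  have hcos : cos (P + Q - a / 2) = sin a := by
    rw [hPQ, show π / 2 - a / 2 - a / 2 = π / 2 - a by ring, cos_pi_div_two_sub]
  simp only [neumannMode]
  rw [show (p - 1 + 1 / 2) * a = P - a by ring, show (q - 1 + 1 / 2) * a = Q - a by ring,
    show p * a = P - a / 2 by ring, show q * a = Q - a / 2 by ring]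
  rw [sin_add] at hsin
  rw [cos_sub, cos_add, sin_add] at hcos
  simp only [cos_sub, sin_sub]
  linear_combination (-sin a) * hsin + cos (a / 2) * hcos - cos P * cos Q * sin_sq_add_cos_sq (a / 2)

end NeumannMode

/-- A positive supersolution for the path `0, …, N` with potential `1` at `K`: Neumann modes from
either end, glued continuously at `K`. -/
noncomputable def kinkedMode (a : ℝ) (N K j : ℕ) : ℝ :=
  if j ≤ K then neumannMode a j * neumannMode a ((N : ℝ) - K)
  else neumannMode a K * neumannMode a ((N : ℝ) - j)

section KinkedMode

variable {a : ℝ} {N K : ℕ}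

theorem kinkedMode_of_le {j : ℕ} (hj : j ≤ K) :
    kinkedMode a N K j = neumannMode a j * neumannMode a ((N : ℝ) - K) :=
  if_pos hj

theorem kinkedMode_of_ge {j : ℕ} (hj : K ≤ j) :
    kinkedMode a N K j = neumannMode a K * neumannMode a ((N : ℝ) - j) := by
  rcases hj.eq_or_lt with rfl | hj
  · exact if_pos le_rfl
  · exact if_neg hj.not_ge

theorem kinkedMode_pos (ha : (2 * N + 3) * a = π) (hK : K ≤ N) {j : ℕ} (hj : j ≤ N) :
    0 < kinkedMode a N K j := by
  have hK0 : (0 : ℝ) ≤ K := K.cast_nonneg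
  have hj0 : (0 : ℝ) ≤ j := j.cast_nonneg
  have hKN : (K : ℝ) ≤ N := by exact_mod_cast hK
  have hjN : (j : ℝ) ≤ N := by exact_mod_cast hj
  rcases le_total j K with hjK | hjK
  · rw [kinkedMode_of_le hjK]
    exact mul_pos (neumannMode_pos ha (by linarith) (by linarith))
      (neumannMode_pos ha (by linarith) (by linarith))
  · rw [kinkedMode_of_ge hjK]
    exact mul_pos (neumannMode_pos ha (by linarith) (by linarith))
      (neumannMode_pos ha (by linarith) (by linarith))

theorem kinkedMode_succ_self (hK : K ≤ N) : kinkedMode a N K (N + 1) = kinkedMode a N K N := by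
  rw [kinkedMode_of_ge (hK.trans N.le_succ), kinkedMode_of_ge hK, sub_self, Nat.cast_succ,
    sub_add_cancel_left, neumannMode_neg_one]

theorem pathLaplacian_kinkedMode (ha : (2 * N + 3) * a = π) (j : ℕ) :
    pathLaplacian (kinkedMode a N K) j + (if j = K then 1 else 0) * kinkedMode a N K j =
      2 * (1 - cos a) * kinkedMode a N K j +
        if j = K then sin (K * a) * sin ((N - K) * a) else 0 := by
  rw [pathLaplacian]
  rcases lt_trichotomy j K with hj | rfl | hj
  · rw [if_neg hj.ne, if_neg hj.ne, kinkedMode_of_le hj.le, kinkedMode_of_le (by omega),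
      kinkedMode_of_le hj, neumannMode_natCast_sub_one, Nat.cast_succ]
    linear_combination (-neumannMode a ((N : ℝ) - K)) *
      neumannMode_sub_one_add_neumannMode_add_one (a := a) (j : ℝ)
  · rw [if_pos rfl, if_pos rfl, kinkedMode_of_le le_rfl, kinkedMode_of_le (Nat.sub_le j 1),
      kinkedMode_of_ge j.le_succ, neumannMode_natCast_sub_one, Nat.cast_succ,
      show (N : ℝ) - (j + 1) = N - j - 1 by ring]
    linear_combination neumannMode_junction (p := j) (q := N - j)
      (by rw [add_sub_cancel]; exact ha)
  · rw [if_neg hj.ne', if_neg hj.ne', kinkedMode_of_ge hj.le, kinkedMode_of_ge (by omega),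
      kinkedMode_of_ge (by omega), Nat.cast_sub (by omega : 1 ≤ j), Nat.cast_one, Nat.cast_succ,
      show (N : ℝ) - (j - 1) = N - j + 1 by ring, show (N : ℝ) - (j + 1) = N - j - 1 by ring]
    linear_combination (-neumannMode a K) *
      neumannMode_sub_one_add_neumannMode_add_one (a := a) ((N : ℝ) - j)

end KinkedMode

section PathInequality

variable {a : ℝ} {N : ℕ}

theorem two_mul_one_sub_cos_mul_sum_sq_le (ha : (2 * N + 3) * a = π) {K : ℕ} (hK : K ≤ N)
    (x : ℕ → ℝ) :
    2 * (1 - cos a) * ∑ j ∈ range (N + 1), x j ^ 2 ≤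
      ∑ j ∈ range N, (x (j + 1) - x j) ^ 2 + x K ^ 2 := by
  have ha0 : 0 < a := pos_of_mul_pos_right (ha ▸ pi_pos) (by positivity)
  have hKN : (K : ℝ) ≤ N := by exact_mod_cast hK
  have hdefect : 0 ≤ sin (K * a) * sin ((N - K) * a) := by
    apply mul_nonneg <;> apply sin_nonneg_of_nonneg_of_le_pi <;> nlinarith [K.cast_nonneg (α := ℝ)]
  have hsuper : ∀ j ≤ N, 2 * (1 - cos a) * kinkedMode a N K j ≤
      pathLaplacian (kinkedMode a N K) j + (if j = K then 1 else 0) * kinkedMode a N K j := by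
    intro j _
    rw [pathLaplacian_kinkedMode ha]
    split_ifs <;> linarith
  simpa [ite_mul, sum_ite_eq', Nat.lt_succ_iff.mpr hK] using
    mul_sum_sq_le_of_supersolution (fun j => kinkedMode_pos ha hK) (kinkedMode_succ_self hK).ge
      hsuper x

theorem two_mul_one_sub_cos_mul_sum_sq_kinkedMode_zero (ha : (2 * N + 3) * a = π) :
    2 * (1 - cos a) * ∑ j ∈ range (N + 1), kinkedMode a N 0 j ^ 2 =
      ∑ j ∈ range N, (kinkedMode a N 0 (j + 1) - kinkedMode a N 0 j) ^ 2 +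
        kinkedMode a N 0 0 ^ 2 := by
  have hsol : ∀ j ≤ N, pathLaplacian (kinkedMode a N 0) j +
      (if j = 0 then 1 else 0) * kinkedMode a N 0 j = 2 * (1 - cos a) * kinkedMode a N 0 j := by
    intro j _
    rw [pathLaplacian_kinkedMode ha]
    simp
  simpa [ite_mul, sum_ite_eq'] using
    (sum_sq_sub_add_eq_of_solution (kinkedMode_succ_self N.zero_le) hsol).symm

end PathInequality

theorem sum_dite_sq_sub_eq_sum_range {N : ℕ} (X : ℕ → ℝ) :
    (∑ j : Fin (N + 1), if h : (j : ℕ) + 1 < N + 1 then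
        (X (⟨j + 1, h⟩ : Fin (N + 1)) - X j) ^ 2 else 0) =
      ∑ j ∈ range N, (X (j + 1) - X j) ^ 2 := by
  rw [Fin.sum_univ_castSucc, dif_neg (by simp), add_zero, ← Fin.sum_univ_eq_sum_range]
  exact sum_congr rfl fun i _ => dif_pos (by simp)

/-- for every `m ∈ ℕ`, `m ≥ 1`, and every `x ∈ ℝ^m`,
`2(1 − cos(π/(2m+1))) |x|² ≤ Σ_{j=1}^{m−1} (x_{j+1} − x_j)² + min_j x_j²`,
and the constant is optimal: some `x ≠ 0` attains equality. -/
theorem tridiagonal_inequality (m : ℕ) (hm : 0 < m) :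
    (∀ x : Fin m → ℝ,
      2 * (1 - Real.cos (Real.pi / (2 * m + 1))) * ∑ i, x i ^ 2 ≤
        (∑ j : Fin m, if h : (j : ℕ) + 1 < m then (x ⟨(j : ℕ) + 1, h⟩ - x j) ^ 2 else 0)
          + ⨅ i, x i ^ 2) ∧
    ∃ x : Fin m → ℝ, x ≠ 0 ∧
      2 * (1 - Real.cos (Real.pi / (2 * m + 1))) * ∑ i, x i ^ 2 =
        (∑ j : Fin m, if h : (j : ℕ) + 1 < m then (x ⟨(j : ℕ) + 1, h⟩ - x j) ^ 2 else 0)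
          + ⨅ i, x i ^ 2 := by
  obtain ⟨N, rfl⟩ : ∃ N, m = N + 1 := ⟨m - 1, by omega⟩
  set a := π / (2 * ((N + 1 : ℕ) : ℝ) + 1)
  have ha : (2 * N + 3) * a = π := by
    simp only [a]
    field_simp
    push_cast
    ring
  have hineq : ∀ x : Fin (N + 1) → ℝ, 2 * (1 - cos a) * ∑ i, x i ^ 2 ≤
      (∑ j : Fin (N + 1), if h : (j : ℕ) + 1 < N + 1 then (x ⟨j + 1, h⟩ - x j) ^ 2 else 0) +
        ⨅ i, x i ^ 2 := by
    intro x
    obtain ⟨X, rfl⟩ : ∃ X : ℕ → ℝ, x = fun i : Fin (N + 1) => X i :=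
      ⟨fun j => x (Fin.ofNat (N + 1) j), by simp⟩
    obtain ⟨K, hK⟩ := exists_eq_ciInf_of_finite (f := fun i : Fin (N + 1) => X i ^ 2)
    rw [← hK, sum_dite_sq_sub_eq_sum_range, Fin.sum_univ_eq_sum_range (fun j => X j ^ 2)]
    exact two_mul_one_sub_cos_mul_sum_sq_le ha K.is_le X
  refine ⟨hineq, fun i => kinkedMode a N 0 i, fun h => ?_, le_antisymm (hineq _) ?_⟩
  · exact (kinkedMode_pos ha N.zero_le N.zero_le).ne' (congrFun h 0)
  · rw [sum_dite_sq_sub_eq_sum_range, Fin.sum_univ_eq_sum_range (fun j => kinkedMode a N 0 j ^ 2),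
      two_mul_one_sub_cos_mul_sum_sq_kinkedMode_zero ha]
    gcongr
    exact ciInf_le (Finite.bddBelow_range _) 0
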